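/- Fix integers g, n ≥ 0 with 2g − 2 + n > 0. Then log E_{k+1}(g,n) = O(k·log k) as k → ∞; that is, there exists a constant C > 0 such that |log E_{k+1}(g,n)| ≤ C·k·log k for every integer k ≥ 2. -/

import Mathlib

open Real Complex Finset

/-- `ζ′(−1)`, as a real number (the derivative of the Riemann zeta function at `−1`
is real, so we take the real part). -/
noncomputable def zetaDerivNegOne : ℝ := (deriv riemannZeta (-1)).re

/-- The constant `E_{k+1}(g,n)`, for an integer `k ≥ 1`:
`E_{k+1}(g,n) = 2^{((3k+1)(g−1)−n)/3} · ((2k)!·π^{2k+1})^{−n/2} ·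
  exp((2g−2+n)·(2ζ′(−1) − (k+1/2)² + (k+1/2)·log(2π) + Σ_{j=1}^{2k}(j−k−1/2)·log j))`. -/
noncomputable def Ek (k g n : ℕ) : ℝ :=
  (2 : ℝ) ^ (((3 * (k : ℝ) + 1) * ((g : ℝ) - 1) - n) / 3) *
    ((Nat.factorial (2 * k) : ℝ) * Real.pi ^ (2 * k + 1)) ^ (-(n : ℝ) / 2) *
    Real.exp ((2 * (g : ℝ) - 2 + n) *
      (2 * zetaDerivNegOne - ((k : ℝ) + 1 / 2) ^ 2 + ((k : ℝ) + 1 / 2) * Real.log (2 * Real.pi)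
        + ∑ j ∈ Finset.Icc 1 (2 * k), ((j : ℝ) - (k : ℝ) - 1 / 2) * Real.log j))

/-!
Up to an affine function of `k`, `log E_{k+1}(g,n)` is `-(n/2) log (2k)!` plus `2g-2+n` times
`Σ_{j ≤ 2k} (j - k - 1/2) log j - (k + 1/2)²`. The first is `O(k log k)` because
`(2k)! ≤ (2k)^(2k)`. In the second the terms of order `k²` cancel; this is seen by squeezing
`Σ log j` and `Σ j log j` between the integrals of `log x` and `x log x` over `[1, 2k]` and
`[1, 2k + 1]`, which leaves an error of order `k log k`.
-/

open Filter Asymptotics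

theorem MonotoneOn.sum_Icc_le_integral {f : ℝ → ℝ} {m : ℕ}
    (hf : MonotoneOn f (Set.Icc 1 (m + 1))) :
    ∑ j ∈ Icc 1 m, f j ≤ ∫ x in (1 : ℝ)..(m + 1), f x := by
  rw [← Finset.Ico_add_one_right_eq_Icc]
  simpa using
    MonotoneOn.sum_le_integral_Ico (a := 1) (b := m + 1) (by omega) (by simpa using hf)

theorem MonotoneOn.add_integral_le_sum_Icc {f : ℝ → ℝ} {m : ℕ} (hm : 1 ≤ m)
    (hf : MonotoneOn f (Set.Icc 1 m)) :
    f 1 + ∫ x in (1 : ℝ)..m, f x ≤ ∑ j ∈ Icc 1 m, f j := by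
  have h := MonotoneOn.integral_le_sum_Ico (a := 1) (b := m) hm (by simpa using hf)
  rw [← Finset.Ico_add_one_right_eq_Icc, sum_eq_sum_Ico_succ_bot (by omega), ← sum_Ico_add']
  simpa using h

theorem integral_self_mul_log {b : ℝ} (hb : 0 < b) :
    ∫ x in (1 : ℝ)..b, x * Real.log x = b ^ 2 / 2 * Real.log b - b ^ 2 / 4 + 1 / 4 := by
  have hpos : ∀ x ∈ Set.uIcc 1 b, 0 < x := fun x hx =>
    lt_of_lt_of_le (lt_min one_pos hb) hx.1
  have hderiv : ∀ x ∈ Set.uIcc 1 b,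
      HasDerivAt (fun t => t ^ 2 / 2 * Real.log t - t ^ 2 / 4) (x * Real.log x) x := by
    intro x hx
    have hx0 := (hpos x hx).ne'
    refine ((((hasDerivAt_pow 2 x).div_const 2).mul (hasDerivAt_log hx0)).sub
      ((hasDerivAt_pow 2 x).div_const 4)).congr_deriv ?_
    field_simp
    ring
  have hcont : ContinuousOn (fun x => x * Real.log x) (Set.uIcc 1 b) :=
    continuousOn_id.mul (continuousOn_log.mono fun x hx => (hpos x hx).ne')
  rw [intervalIntegral.integral_eq_sub_of_hasDerivAt hderiv hcont.intervalIntegrable]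
  norm_num

theorem monotoneOn_log_Icc (b : ℝ) : MonotoneOn Real.log (Set.Icc 1 b) :=
  strictMonoOn_log.monotoneOn.mono fun _ hx => lt_of_lt_of_le one_pos hx.1

theorem monotoneOn_mul_log_Icc (b : ℝ) : MonotoneOn (fun x => x * Real.log x) (Set.Icc 1 b) :=
  mul_log_strictMonoOn.monotoneOn.mono fun _ hx =>
    le_trans (exp_le_one_iff.2 (by norm_num)) hx.1

theorem sum_Icc_log_le (m : ℕ) :
    ∑ j ∈ Icc 1 m, Real.log (j : ℝ) ≤ (m + 1) * Real.log (m + 1) - m := by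
  have := (monotoneOn_log_Icc _).sum_Icc_le_integral (m := m)
  rw [integral_log] at this
  simp only [Real.log_one, mul_zero, sub_zero] at this
  linarith

theorem le_sum_Icc_log {m : ℕ} (hm : 1 ≤ m) :
    m * Real.log m - m + 1 ≤ ∑ j ∈ Icc 1 m, Real.log (j : ℝ) := by
  have := (monotoneOn_log_Icc _).add_integral_le_sum_Icc hm
  rw [integral_log] at this
  simpa using this

theorem sum_Icc_mul_log_le (m : ℕ) :
    ∑ j ∈ Icc 1 m, (j : ℝ) * Real.log j ≤
      (m + 1) ^ 2 / 2 * Real.log (m + 1) - (m + 1) ^ 2 / 4 + 1 / 4 := by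
  have := (monotoneOn_mul_log_Icc _).sum_Icc_le_integral (m := m)
  rwa [integral_self_mul_log (by positivity)] at this

theorem le_sum_Icc_mul_log {m : ℕ} (hm : 1 ≤ m) :
    m ^ 2 / 2 * Real.log m - m ^ 2 / 4 + 1 / 4 ≤ ∑ j ∈ Icc 1 m, (j : ℝ) * Real.log j := by
  have := (monotoneOn_mul_log_Icc _).add_integral_le_sum_Icc hm
  rw [integral_self_mul_log (by positivity)] at this
  simpa using this

theorem log_factorial_le (n : ℕ) : Real.log (n.factorial : ℝ) ≤ n * Real.log n := by
  rw [← Real.log_pow]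
  exact Real.log_le_log (by positivity) (by exact_mod_cast Nat.factorial_le_pow n)

theorem one_le_log_natCast {k : ℕ} (hk : 3 ≤ k) : 1 ≤ Real.log k := by
  rw [Real.le_log_iff_exp_le (by positivity)]
  have : (3 : ℝ) ≤ k := by exact_mod_cast hk
  linarith [Real.exp_one_lt_d9]

theorem mul_log_add_one_sub_log_le {x : ℝ} (hx : 0 < x) :
    x * (Real.log (x + 1) - Real.log x) ≤ 1 := by
  have h := Real.log_le_sub_one_of_pos (show 0 < (x + 1) / x by positivity)
  rw [Real.log_div (by positivity) hx.ne', add_div, div_self hx.ne'] at h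
  calc x * (Real.log (x + 1) - Real.log x) ≤ x * (1 / x) := by gcongr; linarith
    _ = 1 := by field_simp

noncomputable def centeredLogSum (k : ℕ) : ℝ :=
  ∑ j ∈ Icc 1 (2 * k), ((j : ℝ) - k - 1 / 2) * Real.log j - ((k : ℝ) + 1 / 2) ^ 2

theorem abs_centeredLogSum_le {k : ℕ} (hk : 1 ≤ k) :
    |centeredLogSum k| ≤ (2 * k + 1) * (Real.log (2 * k) + 1) := by
  have hK : (1 : ℝ) ≤ k := by exact_mod_cast hk
  have hm : ((2 * k : ℕ) : ℝ) = 2 * k := by push_cast; ring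
  have hP_le := sum_Icc_mul_log_le (2 * k)
  have hP_ge := le_sum_Icc_mul_log (m := 2 * k) (by omega)
  have hL_le := sum_Icc_log_le (2 * k)
  have hL_ge := le_sum_Icc_log (m := 2 * k) (by omega)
  rw [hm] at hP_le hP_ge hL_le hL_ge
  set P := ∑ j ∈ Icc 1 (2 * k), (j : ℝ) * Real.log j
  set L := ∑ j ∈ Icc 1 (2 * k), Real.log (j : ℝ)
  have hsplit : centeredLogSum k = P - (k + 1 / 2) * L - ((k : ℝ) + 1 / 2) ^ 2 := by
    simp only [centeredLogSum, P, L, mul_sum, ← sum_sub_distrib]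
    congr 1
    exact sum_congr rfl fun j _ => by ring
  set v := Real.log (2 * k)
  set u := Real.log (2 * k + 1)
  have hv : 0 ≤ v := Real.log_nonneg (by linarith)
  have hgap : (2 * k + 1) * (u - v) ≤ 3 / 2 := by
    have h := mul_log_add_one_sub_log_le (x := 2 * k) (by positivity)
    have huv : 0 ≤ u - v := sub_nonneg.2 (Real.log_le_log (by positivity) (by linarith))
    nlinarith
  have hc : (0 : ℝ) ≤ k + 1 / 2 := by linarith
  rw [hsplit, abs_le]
  constructor
  · linarith [mul_le_mul_of_nonneg_left hL_le hc, mul_le_mul_of_nonneg_left hgap hc,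
      mul_nonneg (by linarith : (0 : ℝ) ≤ k) hv]
  · linarith [mul_le_mul_of_nonneg_left hL_ge hc, mul_le_mul_of_nonneg_left hgap hc,
      mul_nonneg (by linarith : (0 : ℝ) ≤ k) hv]

theorem isBigO_affine_natCast_mul_log (a b : ℝ) :
    (fun k : ℕ => a * k + b) =O[atTop] fun k => (k : ℝ) * Real.log k := by
  refine IsBigO.of_bound (|a| + |b|) ?_
  filter_upwards [eventually_ge_atTop 3] with k hk
  have hlog := one_le_log_natCast hk
  have hk1 : (1 : ℝ) ≤ k := by exact_mod_cast (show 1 ≤ k by omega)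
  rw [Real.norm_eq_abs, Real.norm_eq_abs,
    abs_of_nonneg (a := (k : ℝ) * Real.log k) (by positivity)]
  calc |a * k + b| ≤ |a| * k + |b| := by
        simpa [abs_mul] using abs_add_le (a * k) b
    _ ≤ (|a| + |b|) * k := by nlinarith [abs_nonneg b]
    _ ≤ (|a| + |b|) * (k * Real.log k) := by
        gcongr
        exact le_mul_of_one_le_right (by positivity) hlog

theorem isBigO_natCast_mul_log_of_abs_le {f : ℕ → ℝ}
    (hf : ∀ k, 1 ≤ k → |f k| ≤ (2 * k + 1) * (Real.log (2 * k) + 1)) :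
    f =O[atTop] fun k => (k : ℝ) * Real.log k := by
  refine IsBigO.of_bound 9 ?_
  filter_upwards [eventually_ge_atTop 3] with k hk
  have hlog := one_le_log_natCast hk
  have hk3 : (3 : ℝ) ≤ k := by exact_mod_cast hk
  have hlog2 : Real.log 2 ≤ 1 := by linarith [Real.log_two_lt_d9]
  rw [Real.norm_eq_abs, Real.norm_eq_abs,
    abs_of_nonneg (a := (k : ℝ) * Real.log k) (by positivity)]
  calc |f k| ≤ (2 * k + 1) * (Real.log 2 + Real.log k + 1) := by
        rw [← Real.log_mul two_ne_zero (by positivity)]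
        exact hf k (by omega)
    _ ≤ (3 * k) * (3 * Real.log k) := by gcongr <;> linarith
    _ = 9 * (k * Real.log k) := by ring

theorem abs_log_factorial_two_mul_le {k : ℕ} (hk : 1 ≤ k) :
    |Real.log (Nat.factorial (2 * k) : ℝ)| ≤ (2 * k + 1) * (Real.log (2 * k) + 1) := by
  have hlog : 0 ≤ Real.log (2 * k : ℝ) := Real.log_nonneg (by norm_cast; omega)
  rw [abs_of_nonneg (Real.log_nonneg (by exact_mod_cast Nat.factorial_pos _))]
  calc Real.log (Nat.factorial (2 * k) : ℝ) ≤ 2 * k * Real.log (2 * k) := by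
        exact_mod_cast log_factorial_le (2 * k)
    _ ≤ (2 * k + 1) * (Real.log (2 * k) + 1) := by nlinarith

theorem exists_pos_forall_abs_le_of_isBigO {f g : ℕ → ℝ} {k₀ : ℕ} (h : f =O[atTop] g)
    (hg : ∀ k, k₀ ≤ k → 0 < g k) : ∃ C > 0, ∀ k, k₀ ≤ k → |f k| ≤ C * g k := by
  obtain ⟨c, hc⟩ := h.bound
  obtain ⟨N, hN⟩ := eventually_atTop.1 hc
  -- the finitely many `k < N` not covered by the `O`-bound are absorbed by `S`
  set S := ∑ i ∈ range N, |f i| / |g i|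
  have hS : 0 ≤ S := sum_nonneg fun i _ => by positivity
  refine ⟨|c| + S + 1, by positivity, fun k hk => ?_⟩
  have hgk := hg k hk
  rcases lt_or_ge k N with hkN | hkN
  · have hterm : |f k| / |g k| ≤ S :=
      single_le_sum (f := fun i => |f i| / |g i|) (fun i _ => by positivity) (mem_range.2 hkN)
    rw [abs_of_pos hgk, div_le_iff₀ hgk] at hterm
    nlinarith [abs_nonneg c]
  · have := hN k hkN
    rw [Real.norm_eq_abs, Real.norm_eq_abs, abs_of_pos hgk] at this
    nlinarith [le_abs_self c]

theorem exists_log_Ek_eq (g n : ℕ) : ∃ a b : ℝ, ∀ k : ℕ, Real.log (Ek k g n) =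
    a * k + b - n / 2 * Real.log (Nat.factorial (2 * k) : ℝ)
      + (2 * g - 2 + n) * centeredLogSum k := by
  refine ⟨(g - 1) * Real.log 2 - n * Real.log π + (2 * g - 2 + n) * Real.log (2 * π),
    (g - 1 - n) / 3 * Real.log 2 - n / 2 * Real.log π
      + (2 * g - 2 + n) * (2 * zetaDerivNegOne + Real.log (2 * π) / 2), fun k => ?_⟩
  have hfac : (0 : ℝ) < Nat.factorial (2 * k) := by exact_mod_cast Nat.factorial_pos _
  have hX : (0 : ℝ) < Nat.factorial (2 * k) * π ^ (2 * k + 1) := by positivity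
  rw [Ek, Real.log_mul (by positivity) (Real.exp_ne_zero _),
    Real.log_mul (by positivity) (by positivity), Real.log_rpow two_pos, Real.log_rpow hX,
    Real.log_exp, Real.log_mul hfac.ne' (by positivity), Real.log_pow, centeredLogSum]
  push_cast
  ring

theorem log_Ek_bigO_general (g n : ℕ) :
    ∃ C > (0 : ℝ), ∀ k : ℕ, 2 ≤ k →
      |Real.log (Ek k g n)| ≤ C * k * Real.log k := by
  obtain ⟨a, b, hE⟩ := exists_log_Ek_eq g n
  have hO : (fun k : ℕ => Real.log (Ek k g n)) =O[atTop] fun k => (k : ℝ) * Real.log k := by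
    simp only [hE]
    have hfac := isBigO_natCast_mul_log_of_abs_le fun _ => abs_log_factorial_two_mul_le
    have hcen := isBigO_natCast_mul_log_of_abs_le fun _ => abs_centeredLogSum_le
    exact ((isBigO_affine_natCast_mul_log a b).sub (hfac.const_mul_left _)).add
      (hcen.const_mul_left _)
  obtain ⟨C, hC, hbound⟩ := exists_pos_forall_abs_le_of_isBigO hO (k₀ := 2) fun k hk =>
    mul_pos (by positivity) (Real.log_pos (by exact_mod_cast hk))
  exact ⟨C, hC, fun k hk => by simpa only [mul_assoc] using hbound k hk⟩

/-- Fix integers `g, n ≥ 0` with `2g − 2 + n > 0`.  Then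
`log E_{k+1}(g,n) = O(k·log k)`: there is `C > 0` such that
`|log E_{k+1}(g,n)| ≤ C·k·log k` for every integer `k ≥ 2`. -/
theorem log_Ek_bigO (g n : ℕ) (hgn : 2 * (g : ℤ) - 2 + n > 0) :
    ∃ C > (0 : ℝ), ∀ k : ℕ, 2 ≤ k →
      |Real.log (Ek k g n)| ≤ C * k * Real.log k :=
  log_Ek_bigO_general g n
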